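/- arXiv:0710.2049 — 5 statements merged into one kernel-verified Lean document; each statement's English description precedes it below -/
import Mathlib

section
/- Let a, b, c be nonzero complex numbers and p, q, r complex numbers. In PSL(2,ℂ), the product g_{ij}·(α^j)·g_{jk}·(α^k)·g_{ki}·(α^i) equals the identity, where g_{ij} = [[0, −a⁻¹],[a, 0]], g_{jk} = [[0, −b⁻¹],[b, 0]], g_{ki} = [[0, −c⁻¹],[c, 0]], and (α^j) = [[1,p],[0,1]], (α^k) = [[1,q],[0,1]], (α^i) = [[1,r],[0,1]], if and only if a⁻² = r·p, b⁻² = p·q, and c⁻² = q·r. -/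
/-!
Every factor has determinant `1`, so the product is `±1` exactly when it is scalar: both
off-diagonal entries vanish and the diagonal entries agree. The off-diagonal entries are
nonzero multiples of `1 - c²qr` and `b²pq - 1`; once these vanish, the diagonal entries agree
iff `c²q = a²p`, which, given `c²qr = 1`, is equivalent to `a²rp = 1`.
-/

open Matrix

theorem Matrix.eq_one_or_eq_neg_one_iff_of_det_eq_one {R : Type*} [CommRing R] [NoZeroDivisors R]
    {M : Matrix (Fin 2) (Fin 2) R} (hM : M.det = 1) :
    M = 1 ∨ M = -1 ↔ M 0 1 = 0 ∧ M 1 0 = 0 ∧ M 0 0 = M 1 1 := by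
  constructor
  · rintro (rfl | rfl) <;> simp
  · rintro ⟨h01, h10, hdiag⟩
    have hsq : M 0 0 * M 0 0 = 1 := by
      rwa [det_fin_two, h01, h10, ← hdiag, mul_zero, sub_zero] at hM
    rw [M.eta_fin_two, h01, h10, ← hdiag]
    rcases mul_self_eq_one_iff.mp hsq with h | h <;> simp [h, one_fin_two]

section

variable {K : Type*} [Field K]

def counterDiag (a : K) : Matrix (Fin 2) (Fin 2) K := !![0, -a⁻¹; a, 0]

def unipotent (x : K) : Matrix (Fin 2) (Fin 2) K := !![1, x; 0, 1]

theorem det_counterDiag {a : K} (ha : a ≠ 0) : (counterDiag a).det = 1 := by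
  simp [counterDiag, det_fin_two_of, ha]

theorem det_unipotent (x : K) : (unipotent x).det = 1 := by
  simp [unipotent, det_fin_two_of]

theorem counterDiag_mul_unipotent (a x : K) :
    counterDiag a * unipotent x = !![0, -a⁻¹; a, a * x] := by
  simp [counterDiag, unipotent]

def hexagon (a b c p q r : K) : Matrix (Fin 2) (Fin 2) K :=
  counterDiag a * unipotent p * counterDiag b * unipotent q * counterDiag c * unipotent r

variable {a b c : K}

theorem det_hexagon (ha : a ≠ 0) (hb : b ≠ 0) (hc : c ≠ 0) (p q r : K) :
    (hexagon a b c p q r).det = 1 := by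
  simp [hexagon, det_counterDiag, det_unipotent, ha, hb, hc]

theorem hexagon_eq (ha : a ≠ 0) (hb : b ≠ 0) (hc : c ≠ 0) (p q r : K) :
    hexagon a b c p q r =
      !![-(b * c * q / a), b / (a * c) * (1 - c ^ 2 * q * r);
        a * c / b * (b ^ 2 * p * q - 1), a * c / b * (b ^ 2 * p * q - 1) * r - a * b * p / c] := by
  simp only [hexagon, mul_assoc, counterDiag_mul_unipotent]
  ext i j
  fin_cases i <;> fin_cases j <;> simp <;> field_simp <;> ring

end

/-- in PSL(2,ℂ) (i.e. up to sign in SL(2,ℂ)), the product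
`g_{ij}·(α^j)·g_{jk}·(α^k)·g_{ki}·(α^i)` of the three counter-diagonal matrices
`[[0,−a⁻¹],[a,0]]`, `[[0,−b⁻¹],[b,0]]`, `[[0,−c⁻¹],[c,0]]` interleaved with the
unipotent matrices `[[1,p],[0,1]]`, `[[1,q],[0,1]]`, `[[1,r],[0,1]]` equals the
identity if and only if `a⁻² = r·p`, `b⁻² = p·q`, `c⁻² = q·r`. -/
theorem hexagon_product_eq_one_iff (a b c p q r : ℂ)
    (ha : a ≠ 0) (hb : b ≠ 0) (hc : c ≠ 0) :
    (!![(0:ℂ), -a⁻¹; a, 0] * !![1, p; 0, 1] * !![(0:ℂ), -b⁻¹; b, 0] * !![1, q; 0, 1] *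
        !![(0:ℂ), -c⁻¹; c, 0] * !![1, r; 0, 1] = 1 ∨
      !![(0:ℂ), -a⁻¹; a, 0] * !![1, p; 0, 1] * !![(0:ℂ), -b⁻¹; b, 0] * !![1, q; 0, 1] *
        !![(0:ℂ), -c⁻¹; c, 0] * !![1, r; 0, 1] = -1) ↔
    ((a ^ 2)⁻¹ = r * p ∧ (b ^ 2)⁻¹ = p * q ∧ (c ^ 2)⁻¹ = q * r) := by
  change hexagon a b c p q r = 1 ∨ hexagon a b c p q r = -1 ↔ _
  rw [eq_one_or_eq_neg_one_iff_of_det_eq_one (det_hexagon ha hb hc p q r), hexagon_eq ha hb hc,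
    ← mul_eq_one_iff_inv_eq₀ (pow_ne_zero 2 ha), ← mul_eq_one_iff_inv_eq₀ (pow_ne_zero 2 hb),
    ← mul_eq_one_iff_inv_eq₀ (pow_ne_zero 2 hc)]
  simp only [of_apply, cons_val_zero, cons_val_one, cons_val_fin_one, mul_eq_zero,
    div_eq_zero_iff, ha, hb, hc, sub_eq_zero, or_false, false_or]
  have hdiag (hy : b ^ 2 * p * q = 1) :
      -(b * c * q / a) = a * c / b * (b ^ 2 * p * q - 1) * r - a * b * p / c ↔
        c ^ 2 * q = a ^ 2 * p := by
    rw [hy, sub_self, mul_zero, zero_mul, zero_sub, neg_inj, div_eq_div_iff ha hc]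
    constructor <;> intro h
    · exact mul_left_cancel₀ hb (by linear_combination h)
    · linear_combination b * h
  constructor
  · rintro ⟨hz, hy, hd⟩
    have hd := (hdiag hy).mp hd
    exact ⟨by linear_combination -r * hd - hz, by linear_combination hy, by linear_combination -hz⟩
  · rintro ⟨hx, hy, hz⟩
    have hy : b ^ 2 * p * q = 1 := by linear_combination hy
    exact ⟨by linear_combination -hz, hy,
      (hdiag hy).mpr (by linear_combination -c ^ 2 * q * hx + a ^ 2 * p * hz)⟩
end

section
/- Let g, h ∈ SL(3,ℂ) with g⁻¹h = [[a,b,c],[d,e,f],[g',h',i]] satisfying g' ≠ 0 and dh' − eg' ≠ 0. Then there exist unique upper triangular unipotent matrices u, v ∈ SL(3,ℂ) such that u⁻¹(g⁻¹h)v is counter-diagonal (nonzero entries only on the anti-diagonal). Writing u = [[1,x,y],[0,1,z],[0,0,1]] and v = [[1,r,s],[0,1,t],[0,0,1]], the solution is r = −h'/g', y = a/g', z = d/g', x = (ah'−bg')/(dh'−eg'), s = (ei−fh')/(dh'−eg'), t = (fg'−di)/(dh'−eg'), and the anti-diagonal of u⁻¹(g⁻¹h)v is (γ, β, α) = (1/(dh'−eg'),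 −(dh'−eg')/g', g'). -/
/-- Upper triangular unipotent 3×3 matrix. -/
def uni3 (x y z : ℂ) : Matrix (Fin 3) (Fin 3) ℂ := !![1, x, y; 0, 1, z; 0, 0, 1]

/-- A 3×3 matrix is counter-diagonal if its only (possibly) nonzero entries are in
positions (1,3), (2,2), (3,1). -/
def IsCounterDiag3 (m : Matrix (Fin 3) (Fin 3) ℂ) : Prop :=
  m 0 0 = 0 ∧ m 0 1 = 0 ∧ m 1 0 = 0 ∧ m 1 2 = 0 ∧ m 2 1 = 0 ∧ m 2 2 = 0

/-!
Written out entrywise, the six vanishing conditions on `u⁻¹ M v` form a triangular system: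
the entries `(1,0)` and `(2,1)` fix `z` and `r`, then `(0,0)` fixes `y`, the entries `(0,1)` and
`(1,2)` fix `x` and `t` after multiplying by `g'`, and `(2,2)` fixes `s`. The pivots are `g'` and
`dh' − eg'`. For the counter-diagonal, `α = g'` and `β = e − zh'` are read off directly, and `γ`
comes from `det (u⁻¹ M v) = det M = 1`, a counter-diagonal matrix having determinant `−αβγ`.
-/

open Matrix

lemma uni3_inv (x y z : ℂ) : (uni3 x y z)⁻¹ = uni3 (-x) (x * z - y) (-z) := by
  apply inv_eq_right_inv
  ext i j
  fin_cases i <;> fin_cases j <;> simp [uni3, mul_apply, Fin.sum_univ_succ]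

lemma det_uni3 (x y z : ℂ) : (uni3 x y z).det = 1 := by
  simp [uni3, det_fin_three]

lemma uni3_inv_mul_mul_uni3 (x y z r s t a b c d e f g h i : ℂ) :
    (uni3 x y z)⁻¹ * !![a, b, c; d, e, f; g, h, i] * uni3 r s t =
      !![a - x * d + (x * z - y) * g,
         (a - x * d + (x * z - y) * g) * r + (b - x * e + (x * z - y) * h),
         (a - x * d + (x * z - y) * g) * s + (b - x * e + (x * z - y) * h) * t +
           (c - x * f + (x * z - y) * i);
         d - z * g, (d - z * g) * r + (e - z * h), (d - z * g) * s + (e - z * h) * t + (f - z * i);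
         g, g * r + h, g * s + h * t + i] := by
  rw [uni3_inv]
  ext i j
  fin_cases i <;> fin_cases j <;> simp [uni3, mul_apply, Fin.sum_univ_succ] <;> ring

namespace IsCounterDiag3

variable {m : Matrix (Fin 3) (Fin 3) ℂ}

lemma eq_antidiag (hm : IsCounterDiag3 m) :
    m = !![0, 0, m 0 2; 0, m 1 1, 0; m 2 0, 0, 0] := by
  obtain ⟨h00, h01, h10, h12, h21, h22⟩ := hm
  ext i j
  fin_cases i <;> fin_cases j <;> simp [h00, h01, h10, h12, h21, h22]

lemma det_eq (hm : IsCounterDiag3 m) : m.det = -(m 0 2 * m 1 1 * m 2 0) := by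
  obtain ⟨h00, h01, h10, h12, h21, h22⟩ := hm
  rw [det_fin_three, h00, h01, h10, h12, h21, h22]
  ring

end IsCounterDiag3

section Solution

variable {a b c d e f g h i x y z r s t : ℂ}

lemma isCounterDiag3_uni3_inv_mul_mul_uni3_iff_mul_eq (hg : g ≠ 0) (hδ : d * h - e * g ≠ 0) :
    IsCounterDiag3 ((uni3 x y z)⁻¹ * !![a, b, c; d, e, f; g, h, i] * uni3 r s t) ↔
      x * (d * h - e * g) = a * h - b * g ∧ y * g = a ∧ z * g = d ∧ r * g = -h ∧
        s * (d * h - e * g) = e * i - f * h ∧ t * (d * h - e * g) = f * g - d * i := by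
  rw [uni3_inv_mul_mul_uni3, IsCounterDiag3]
  simp only [of_apply, cons_val', cons_val_zero, cons_val_one, cons_val_two, empty_val',
    cons_val_fin_one, head_cons, tail_cons, head_fin_const]
  constructor
  · rintro ⟨E00, E01, E10, E12, E21, E22⟩
    have hz : z * g = d := by linear_combination -E10
    have hy : y * g = a := by linear_combination -E00 - x * E10
    have ht : t * (d * h - e * g) = f * g - d * i := by
      linear_combination -g * E12 - g * s * hz - (h * t + i) * hz
    refine ⟨?_, hy, hz, by linear_combination E21, ?_, ht⟩
    · linear_combination g * E01 - g * r * E00 - x * h * hz + h * hy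
    · refine mul_left_cancel₀ hg ?_
      linear_combination (d * h - e * g) * E22 - h * ht
  · rintro ⟨hx, hy, hz, hr, hs, ht⟩
    have E00 : a - x * d + (x * z - y) * g = 0 := by linear_combination x * hz - hy
    refine ⟨E00, ?_, by linear_combination -hz, ?_, by linear_combination hr, ?_⟩
    · refine mul_left_cancel₀ hg ?_
      linear_combination g * r * E00 + x * h * hz - h * hy + hx
    · refine mul_left_cancel₀ hg ?_
      linear_combination -g * s * hz - (h * t + i) * hz - ht
    · refine mul_left_cancel₀ hδ ?_
      linear_combination g * hs + h * ht

lemma isCounterDiag3_uni3_inv_mul_mul_uni3_iff (hg : g ≠ 0) (hδ : d * h - e * g ≠ 0) :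
    IsCounterDiag3 ((uni3 x y z)⁻¹ * !![a, b, c; d, e, f; g, h, i] * uni3 r s t) ↔
      (x, y, z, r, s, t) = ((a * h - b * g) / (d * h - e * g), a / g, d / g, -h / g,
        (e * i - f * h) / (d * h - e * g), (f * g - d * i) / (d * h - e * g)) := by
  simp only [isCounterDiag3_uni3_inv_mul_mul_uni3_iff_mul_eq hg hδ, Prod.mk.injEq,
    eq_div_iff hg, eq_div_iff hδ]

end Solution

/-- for `A, B ∈ SL(3,ℂ)` with `A⁻¹B = [[a,b,c],[d,e,f],[g',h',i]]`,
`g' ≠ 0` and `dh' − eg' ≠ 0`, there exist unique upper triangular unipotent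
`u = [[1,x,y],[0,1,z],[0,0,1]]` and `v = [[1,r,s],[0,1,t],[0,0,1]]` with
`u⁻¹(A⁻¹B)v` counter-diagonal, with the explicit solution and anti-diagonal
`(γ, β, α) = (1/(dh'−eg'), −(dh'−eg')/g', g')`. -/
theorem unique_unipotent_conjugation_SL3 (A B : Matrix.SpecialLinearGroup (Fin 3) ℂ)
    (a b c d e f g' h' i : ℂ)
    (hm : (↑(A⁻¹ * B) : Matrix (Fin 3) (Fin 3) ℂ) = !![a, b, c; d, e, f; g', h', i])
    (h1 : g' ≠ 0) (h2 : d * h' - e * g' ≠ 0) :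
    (∃! t : ℂ × ℂ × ℂ × ℂ × ℂ × ℂ,
      IsCounterDiag3 ((uni3 t.1 t.2.1 t.2.2.1)⁻¹ * (↑(A⁻¹ * B) : Matrix (Fin 3) (Fin 3) ℂ) *
        uni3 t.2.2.2.1 t.2.2.2.2.1 t.2.2.2.2.2)) ∧
    (uni3 ((a * h' - b * g') / (d * h' - e * g')) (a / g') (d / g'))⁻¹ *
        (↑(A⁻¹ * B) : Matrix (Fin 3) (Fin 3) ℂ) *
        uni3 (-h' / g') ((e * i - f * h') / (d * h' - e * g'))
          ((f * g' - d * i) / (d * h' - e * g')) =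
      !![0, 0, 1 / (d * h' - e * g'); 0, -(d * h' - e * g') / g', 0; g', 0, 0] := by
  have hdet : (↑(A⁻¹ * B) : Matrix (Fin 3) (Fin 3) ℂ).det = 1 := (A⁻¹ * B).property
  rw [hm] at hdet ⊢
  refine ⟨⟨(_, _, _, _, _, _), (isCounterDiag3_uni3_inv_mul_mul_uni3_iff h1 h2).2 rfl,
    fun _ hN => (isCounterDiag3_uni3_inv_mul_mul_uni3_iff h1 h2).1 hN⟩, ?_⟩
  set N := (uni3 ((a * h' - b * g') / (d * h' - e * g')) (a / g') (d / g'))⁻¹ *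
    !![a, b, c; d, e, f; g', h', i] *
    uni3 (-h' / g') ((e * i - f * h') / (d * h' - e * g')) ((f * g' - d * i) / (d * h' - e * g'))
  have hN : IsCounterDiag3 N := (isCounterDiag3_uni3_inv_mul_mul_uni3_iff h1 h2).2 rfl
  have h20 : N 2 0 = g' := by simp [N, uni3_inv_mul_mul_uni3]
  have h11 : N 1 1 = -(d * h' - e * g') / g' := by
    simp only [N, uni3_inv_mul_mul_uni3, of_apply, cons_val', cons_val_one, cons_val_zero,
      cons_val_fin_one]
    field_simp
    ring
  have h02 : N 0 2 = 1 / (d * h' - e * g') := by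
    have hdetN : N.det = 1 := by simp [N, det_uni3, hdet]
    rw [hN.det_eq, h20, h11] at hdetN
    field_simp at hdetN ⊢
    linear_combination hdetN
  rw [hN.eq_antidiag, h02, h11, h20]
end

section
/- Let z0, z1, z2, z3 ∈ ℂ be four distinct complex numbers with cross-ratio z = (z0−z3)(z1−z2)/((z0−z2)(z1−z3)). If complex numbers α^i_{jk} for i,j,k distinct in {0,1,2,3} satisfy the cross-ratio relations z = α^0_{12}/α^0_{13} = α^1_{03}/α^1_{02} = α^2_{30}/α^2_{31} = α^3_{21}/α^3_{20} together with α^i_{jk} = −α^i_{kj} and α^i_{jk} + α^i_{kl} + α^i_{lj} = 0, then for all i,j,k,l one has α^i_{kj}·α^j_{ik} = α^i_{lj}·α^j_{il}. -/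
open Function

/-! At a vertex `i` the labels `α^i_{jk}` form an antisymmetric cocycle on the three other
vertices. These cocycles form a plane, so a single ratio `α^i_{jk} / α^i_{jl}` fixes them up to
a scalar `c_i`. The ideal simplex itself carries such a cocycle, `1/(z_i - z_j) - 1/(z_i - z_k)`,
and its ratios are the cross-ratio `z` at each vertex. Hence
`α^i_{jk} = c_i (1/(z_i - z_j) - 1/(z_i - z_k))`, and then
`α^i_{kj} α^j_{ik} = c_i c_j / (z_i - z_j)^2` does not depend on `k`. -/

theorem fin4_eq_or_eq_or_eq_of_ne {i j k l m : Fin 4} (hij : i ≠ j) (hik : i ≠ k) (hil : i ≠ l)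
    (hjk : j ≠ k) (hjl : j ≠ l) (hkl : k ≠ l) (hm : m ≠ i) : m = j ∨ m = k ∨ m = l := by
  omega

theorem injective_vecCons_four {α : Type*} {a b c d : α} (hab : a ≠ b) (hac : a ≠ c)
    (had : a ≠ d) (hbc : b ≠ c) (hbd : b ≠ d) (hcd : c ≠ d) : Injective ![a, b, c, d] := by
  intro x y hxy
  fin_cases x <;> fin_cases y <;> first | rfl | simp_all

section Label

variable {K : Type*} [Field K]

def IsLinkCocycle (a : Fin 4 → Fin 4 → K) (i : Fin 4) : Prop :=
  (∀ j k, i ≠ j → i ≠ k → j ≠ k → a j k = -a k j) ∧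
    ∀ j k l, i ≠ j → i ≠ k → i ≠ l → j ≠ k → j ≠ l → k ≠ l → a j k + a k l + a l j = 0

namespace IsLinkCocycle

variable {a b : Fin 4 → Fin 4 → K} {i j k l : Fin 4}

theorem sub_const_mul (ha : IsLinkCocycle a i) (hb : IsLinkCocycle b i) (c : K) :
    IsLinkCocycle (fun m n => a m n - c * b m n) i := by
  refine ⟨fun m n him hin hmn => ?_, fun m n p him hin hip hmn hmp hnp => ?_⟩
  · linear_combination ha.1 m n him hin hmn - c * hb.1 m n him hin hmn
  · linear_combination
      ha.2 m n p him hin hip hmn hmp hnp - c * hb.2 m n p him hin hip hmn hmp hnp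

theorem eq_zero_of_eq_zero (ha : IsLinkCocycle a i) (hij : i ≠ j) (hik : i ≠ k) (hil : i ≠ l)
    (hjk : j ≠ k) (hjl : j ≠ l) (hkl : k ≠ l) (hjk0 : a j k = 0) (hjl0 : a j l = 0)
    {m n : Fin 4} (him : i ≠ m) (hin : i ≠ n) (hmn : m ≠ n) : a m n = 0 := by
  have hkl0 : a k l = 0 := by
    linear_combination ha.2 j k l hij hik hil hjk hjl hkl - ha.1 j l hij hil hjl - hjk0 + hjl0
  have hm := fin4_eq_or_eq_or_eq_of_ne hij hik hil hjk hjl hkl (Ne.symm him)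
  have hn := fin4_eq_or_eq_or_eq_of_ne hij hik hil hjk hjl hkl (Ne.symm hin)
  rcases hm with rfl | rfl | rfl <;> rcases hn with rfl | rfl | rfl <;>
    simp_all [ha.1 _ _ him hin hmn]

theorem exists_eq_const_mul (ha : IsLinkCocycle a i) (hb : IsLinkCocycle b i) (hij : i ≠ j)
    (hik : i ≠ k) (hil : i ≠ l) (hjk : j ≠ k) (hjl : j ≠ l) (hkl : k ≠ l)
    (hbk : b j k ≠ 0) (hbl : b j l ≠ 0) (hab : a j k / a j l = b j k / b j l) :
    ∃ c, ∀ m n, i ≠ m → i ≠ n → m ≠ n → a m n = c * b m n := by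
  have hal : a j l ≠ 0 := by
    rintro hal
    rw [hal, div_zero, eq_comm] at hab
    exact div_ne_zero hbk hbl hab
  refine ⟨a j l / b j l, fun m n him hin hmn => sub_eq_zero.mp ?_⟩
  refine (ha.sub_const_mul hb _).eq_zero_of_eq_zero hij hik hil hjk hjl hkl ?_ ?_ him hin hmn
  · rw [div_eq_div_iff hal hbl] at hab
    field_simp
    linear_combination hab
  · field_simp
    ring

end IsLinkCocycle

def idealLabel (w : Fin 4 → K) (i j k : Fin 4) : K := (w i - w j)⁻¹ - (w i - w k)⁻¹

variable {w : Fin 4 → K}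

theorem isLinkCocycle_idealLabel (i : Fin 4) : IsLinkCocycle (idealLabel w i) i :=
  ⟨fun j k _ _ _ => by unfold idealLabel; ring, fun j k l _ _ _ _ _ _ => by unfold idealLabel; ring⟩

variable {i j k l : Fin 4}

theorem idealLabel_eq (hw : Injective w) (hij : i ≠ j) (hik : i ≠ k) :
    idealLabel w i j k = (w j - w k) / ((w i - w j) * (w i - w k)) := by
  have := sub_ne_zero.mpr (hw.ne hij)
  have := sub_ne_zero.mpr (hw.ne hik)
  unfold idealLabel
  field_simp
  ring

theorem idealLabel_ne_zero (hw : Injective w) (hij : i ≠ j) (hik : i ≠ k) (hjk : j ≠ k) :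
    idealLabel w i j k ≠ 0 := by
  rw [idealLabel_eq hw hij hik]
  exact div_ne_zero (sub_ne_zero.mpr (hw.ne hjk))
    (mul_ne_zero (sub_ne_zero.mpr (hw.ne hij)) (sub_ne_zero.mpr (hw.ne hik)))

theorem idealLabel_div_idealLabel (hw : Injective w) (hij : i ≠ j) (hik : i ≠ k) (hil : i ≠ l)
    (hjl : j ≠ l) :
    idealLabel w i j k / idealLabel w i j l =
      (w i - w l) * (w j - w k) / ((w i - w k) * (w j - w l)) := by
  have := sub_ne_zero.mpr (hw.ne hij)
  have := sub_ne_zero.mpr (hw.ne hik)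
  have := sub_ne_zero.mpr (hw.ne hil)
  have := sub_ne_zero.mpr (hw.ne hjl)
  rw [idealLabel_eq hw hij hik, idealLabel_eq hw hij hil]
  field_simp

theorem idealLabel_mul_idealLabel (hw : Injective w) (hij : i ≠ j) (hik : i ≠ k) (hjk : j ≠ k) :
    idealLabel w i k j * idealLabel w j i k = ((w i - w j) ^ 2)⁻¹ := by
  have := sub_ne_zero.mpr (hw.ne hij)
  have := sub_ne_zero.mpr (hw.ne hik)
  have := sub_ne_zero.mpr (hw.ne hjk)
  have := sub_ne_zero.mpr (hw.ne hij.symm)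
  rw [idealLabel_eq hw hik hij, idealLabel_eq hw hij.symm hjk]
  field_simp
  ring

theorem IsLinkCocycle.exists_eq_const_mul_idealLabel {a : Fin 4 → Fin 4 → K}
    (ha : IsLinkCocycle a i) (hw : Injective w)
    (hij : i ≠ j) (hik : i ≠ k) (hil : i ≠ l) (hjk : j ≠ k) (hjl : j ≠ l) (hkl : k ≠ l)
    (h : a j k / a j l = (w i - w l) * (w j - w k) / ((w i - w k) * (w j - w l))) :
    ∃ c, ∀ m n, i ≠ m → i ≠ n → m ≠ n → a m n = c * idealLabel w i m n :=
  ha.exists_eq_const_mul (isLinkCocycle_idealLabel i) hij hik hil hjk hjl hkl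
    (idealLabel_ne_zero hw hij hik hjk) (idealLabel_ne_zero hw hij hil hjl)
    (by rw [h, idealLabel_div_idealLabel hw hij hik hil hjl])

end Label

theorem alpha_product_independent_general (z0 z1 z2 z3 : ℂ)
    (hd : z0 ≠ z1 ∧ z0 ≠ z2 ∧ z0 ≠ z3 ∧ z1 ≠ z2 ∧ z1 ≠ z3 ∧ z2 ≠ z3)
    (z : ℂ) (hz : z = (z0 - z3) * (z1 - z2) / ((z0 - z2) * (z1 - z3)))
    (α : Fin 4 → Fin 4 → Fin 4 → ℂ)
    (hanti : ∀ i j k : Fin 4, i ≠ j → i ≠ k → j ≠ k → α i j k = -α i k j)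
    (hcoc : ∀ i j k l : Fin 4, i ≠ j → i ≠ k → i ≠ l → j ≠ k → j ≠ l → k ≠ l →
      α i j k + α i k l + α i l j = 0)
    (hcr0 : z = α 0 1 2 / α 0 1 3) (hcr1 : z = α 1 0 3 / α 1 0 2)
    (hcr2 : z = α 2 3 0 / α 2 3 1) (hcr3 : z = α 3 2 1 / α 3 2 0) :
    ∀ i j k l : Fin 4, i ≠ j → i ≠ k → i ≠ l → j ≠ k → j ≠ l → k ≠ l →
      α i k j * α j i k = α i l j * α j i l := by
  obtain ⟨h01, h02, h03, h12, h13, h23⟩ := hd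
  have hw := injective_vecCons_four h01 h02 h03 h12 h13 h23
  set w : Fin 4 → ℂ := ![z0, z1, z2, z3]
  have hα (i : Fin 4) : IsLinkCocycle (α i) i := ⟨hanti i, hcoc i⟩
  have hc0 := (hα 0).exists_eq_const_mul_idealLabel hw (j := 1) (k := 2) (l := 3)
    (by decide) (by decide) (by decide) (by decide) (by decide) (by decide)
    (by rw [← hcr0, hz]; rfl)
  have hc1 := (hα 1).exists_eq_const_mul_idealLabel hw (j := 0) (k := 3) (l := 2)
    (by decide) (by decide) (by decide) (by decide) (by decide) (by decide)
    (by rw [← hcr1, hz]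
        simp only [w, Matrix.cons_val, Matrix.cons_val_zero, Matrix.cons_val_one]
        ring)
  have hc2 := (hα 2).exists_eq_const_mul_idealLabel hw (j := 3) (k := 0) (l := 1)
    (by decide) (by decide) (by decide) (by decide) (by decide) (by decide)
    (by rw [← hcr2, hz]
        simp only [w, Matrix.cons_val, Matrix.cons_val_zero, Matrix.cons_val_one]
        ring)
  have hc3 := (hα 3).exists_eq_const_mul_idealLabel hw (j := 2) (k := 1) (l := 0)
    (by decide) (by decide) (by decide) (by decide) (by decide) (by decide)
    (by rw [← hcr3, hz]
        simp only [w, Matrix.cons_val, Matrix.cons_val_zero, Matrix.cons_val_one]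
        ring)
  have hc (i : Fin 4) : ∃ c, ∀ m n, i ≠ m → i ≠ n → m ≠ n → α i m n = c * idealLabel w i m n := by
    fin_cases i
    exacts [hc0, hc1, hc2, hc3]
  choose c hc using hc
  intro i j k l hij hik hil hjk hjl hkl
  rw [hc i k j hik hij hjk.symm, hc j i k hij.symm hjk hik, hc i l j hil hij hjl.symm,
    hc j i l hij.symm hjl hil]
  calc c i * idealLabel w i k j * (c j * idealLabel w j i k)
      = c i * c j * (idealLabel w i k j * idealLabel w j i k) := by ring
    _ = c i * c j * (idealLabel w i l j * idealLabel w j i l) := by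
      rw [idealLabel_mul_idealLabel hw hij hik hjk, idealLabel_mul_idealLabel hw hij hil hjl]
    _ = c i * idealLabel w i l j * (c j * idealLabel w j i l) := by ring

/-- if the short-edge labels `α^i_{jk}` of a truncated tetrahedron over
an ideal simplex with cross-ratio `z` satisfy antisymmetry, the cocycle condition and
the cross-ratio relations `z = α^0_{12}/α^0_{13} = α^1_{03}/α^1_{02} = α^2_{30}/α^2_{31}
= α^3_{21}/α^3_{20}`, then `α^i_{kj}·α^j_{ik} = α^i_{lj}·α^j_{il}` for all distinct
`i, j, k, l`. -/
theorem alpha_product_independent (z0 z1 z2 z3 : ℂ)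
    (hd : z0 ≠ z1 ∧ z0 ≠ z2 ∧ z0 ≠ z3 ∧ z1 ≠ z2 ∧ z1 ≠ z3 ∧ z2 ≠ z3)
    (z : ℂ) (hz : z = (z0 - z3) * (z1 - z2) / ((z0 - z2) * (z1 - z3)))
    (α : Fin 4 → Fin 4 → Fin 4 → ℂ)
    (hne : ∀ i j k : Fin 4, i ≠ j → i ≠ k → j ≠ k → α i j k ≠ 0)
    (hanti : ∀ i j k : Fin 4, i ≠ j → i ≠ k → j ≠ k → α i j k = -α i k j)
    (hcoc : ∀ i j k l : Fin 4, i ≠ j → i ≠ k → i ≠ l → j ≠ k → j ≠ l → k ≠ l →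
      α i j k + α i k l + α i l j = 0)
    (hcr0 : z = α 0 1 2 / α 0 1 3) (hcr1 : z = α 1 0 3 / α 1 0 2)
    (hcr2 : z = α 2 3 0 / α 2 3 1) (hcr3 : z = α 3 2 1 / α 3 2 0) :
    ∀ i j k l : Fin 4, i ≠ j → i ≠ k → i ≠ l → j ≠ k → j ≠ l → k ≠ l →
      α i k j * α j i k = α i l j * α j i l :=
  alpha_product_independent_general z0 z1 z2 z3 hd z hz α hanti hcoc hcr0 hcr1 hcr2 hcr3
end

section
/- Define ν̂ : (flattened simplices) → ℂ ∧_ℤ ℂ by (w0,w1,w2) ↦ w0 ∧ w1, and define μ on a triple of c-parameters (c01, c02, c12) of a triangle by μ = Log c01 ∧ Log c02 − Log c01 ∧ Log c12 + Log c02 ∧ Log c12. Then for a truncated 3-simplex with c-parameters c_{ij} (0 ≤ i < j ≤ 3) and flattening w0 = Log c03 + Log c12 − Log c02 − Log c13, w1 = Log c02 + Log c13 − Log c01 − Log c23, one has w0 ∧ w1 = Σ_{i=0}^{3} (−1)^i μ(∂_i), where ∂_i is the triple of c-parameters of the face omitting vertex i (with induced vertex ordering). -/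
/-- formal identity in `ℂ ∧_ℤ ℂ` (represented by an arbitrary
ℤ-biadditive alternating map `ω : ℂ → ℂ → M`): for `ℓ_{ij} = Log c_{ij}` and
`w0 = ℓ03 + ℓ12 − ℓ02 − ℓ13`, `w1 = ℓ02 + ℓ13 − ℓ01 − ℓ23`, one has
`w0 ∧ w1 = Σ_{i=0}^{3} (−1)^i μ(∂_i)` where
`μ(c01,c02,c12) = ℓ01 ∧ ℓ02 − ℓ01 ∧ ℓ12 + ℓ02 ∧ ℓ12` on each face. -/
theorem wedge_w0_w1_eq_alternating_sum_mu {M : Type*} [AddCommGroup M]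
    (ω : ℂ → ℂ → M)
    (haddl : ∀ x y z : ℂ, ω (x + y) z = ω x z + ω y z)
    (haddr : ∀ x y z : ℂ, ω x (y + z) = ω x y + ω x z)
    (halt : ∀ x : ℂ, ω x x = 0)
    (ℓ : Fin 4 → Fin 4 → ℂ) :
    ω (ℓ 0 3 + ℓ 1 2 - ℓ 0 2 - ℓ 1 3) (ℓ 0 2 + ℓ 1 3 - ℓ 0 1 - ℓ 2 3) =
      (ω (ℓ 1 2) (ℓ 1 3) - ω (ℓ 1 2) (ℓ 2 3) + ω (ℓ 1 3) (ℓ 2 3)) -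
      (ω (ℓ 0 2) (ℓ 0 3) - ω (ℓ 0 2) (ℓ 2 3) + ω (ℓ 0 3) (ℓ 2 3)) +
      (ω (ℓ 0 1) (ℓ 0 3) - ω (ℓ 0 1) (ℓ 1 3) + ω (ℓ 0 3) (ℓ 1 3)) -
      (ω (ℓ 0 1) (ℓ 0 2) - ω (ℓ 0 1) (ℓ 1 2) + ω (ℓ 0 2) (ℓ 1 2)) := by
  have hzl : ∀ y : ℂ, ω 0 y = 0 := by
    intro y
    have h := haddl 0 0 y
    simp only [add_zero] at h
    exact (left_eq_add.mp h)
  have hnl : ∀ x y : ℂ, ω (-x) y = -ω x y := by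
    intro x y
    have h := haddl x (-x) y
    simp only [add_neg_cancel, hzl] at h
    exact (neg_eq_of_add_eq_zero_right h.symm).symm
  have hnr : ∀ x y : ℂ, ω x (-y) = -ω x y := by
    intro x y
    have h := haddr x y (-y)
    simp only [add_neg_cancel] at h
    have hz : ω x 0 = 0 := by
      have h0 := haddr x 0 0
      simp only [add_zero] at h0
      exact (left_eq_add.mp h0)
    rw [hz] at h
    exact (neg_eq_of_add_eq_zero_right h.symm).symm
  have hsl : ∀ x y z : ℂ, ω (x - y) z = ω x z - ω y z := by
    intro x y z
    rw [sub_eq_add_neg, haddl, hnl, sub_eq_add_neg]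
  have hsr : ∀ x y z : ℂ, ω x (y - z) = ω x y - ω x z := by
    intro x y z
    rw [sub_eq_add_neg, haddr, hnr, sub_eq_add_neg]
  have hskew : ∀ x y : ℂ, ω y x = -ω x y := by
    intro x y
    have h := halt (x + y)
    rw [haddl, haddr, haddr, halt, halt, zero_add, add_zero] at h
    exact (neg_eq_of_add_eq_zero_right h).symm
  simp only [hsl, hsr, haddl, haddr, halt,
    hskew (ℓ 0 2) (ℓ 0 3), hskew (ℓ 0 1) (ℓ 0 3), hskew (ℓ 0 1) (ℓ 1 2),
    hskew (ℓ 0 1) (ℓ 0 2), hskew (ℓ 0 2) (ℓ 1 3), hskew (ℓ 0 1) (ℓ 1 3),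
    hskew (ℓ 1 2) (ℓ 1 3), hskew (ℓ 0 2) (ℓ 1 2)]
  abel
end

section
/- Let x be a root of the polynomial X³ − X² + 1 with positive imaginary part, and set u = x², v = x² − x + 1, w = x² − x + 1. Then u, v, w all lie in ℂ \ {0,1}, all have positive imaginary part, and they satisfy the gluing equations of the 5₂ knot complement: writing u' = 1/(1−u), u'' = 1−1/u and similarly for v, w, one has u'·u''·v·v'·(w')²·w'' = 1, u·u''·v'·v''·w² = 1, and u·u'·v·v''·w'' = 1, together with the cusp equations w⁻¹·u' = 1 and w'·u'·u·v'·w·w''·u'·w'·w·v'·u·u''·v' = 1. -/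
/-!
Write `z' = 1/(1 - z)` and `z'' = 1 - 1/z`. The root `x` makes `v = x² - x + 1` satisfy
`v'' = x² = u` and `v + (1 - v)³ = 0`, so `u' = v` and `u'' = v'`: every shape parameter
of the triangulation is one of `v, v', v''`. Each gluing or cusp monomial then becomes a
product of powers of `v v' v'' = -1` and `v v'³ = -1`. Positivity of the imaginary parts
comes from `Re x > 1/2`, which follows from separating the real and imaginary parts of the
cubic.
-/

section ShapeParameters

variable {K : Type*} [Field K]

def shape' (z : K) : K := 1 / (1 - z)

def shape'' (z : K) : K := 1 - 1 / z

theorem shape'_shape'' (z : K) : shape' (shape'' z) = z := by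
  simp [shape', shape'']

theorem shape''_shape'' {z : K} (h0 : z ≠ 0) (h1 : z ≠ 1) :
    shape'' (shape'' z) = shape' z := by
  have h1' : 1 - z ≠ 0 := sub_ne_zero.mpr h1.symm
  unfold shape' shape''
  field_simp
  ring

theorem mul_shape'_mul_shape'' {z : K} (h0 : z ≠ 0) (h1 : z ≠ 1) :
    z * shape' z * shape'' z = -1 := by
  have h1' : 1 - z ≠ 0 := sub_ne_zero.mpr h1.symm
  unfold shape' shape''
  field_simp
  ring

theorem mul_shape'_pow_three_eq_neg_one {z : K} (h1 : z ≠ 1) (h : z + (1 - z) ^ 3 = 0) :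
    z * shape' z ^ 3 = -1 := by
  have h1' : 1 - z ≠ 0 := sub_ne_zero.mpr h1.symm
  unfold shape'
  field_simp
  linear_combination h

end ShapeParameters

section FiveTwo

variable {K : Type*} [Field K] {x : K}

theorem sq_eq_shape''_of_root (hx : x ^ 3 - x ^ 2 + 1 = 0) (hv : x ^ 2 - x + 1 ≠ 0) :
    x ^ 2 = shape'' (x ^ 2 - x + 1) := by
  rw [shape'', eq_sub_iff_add_eq, ← eq_sub_iff_add_eq', div_eq_iff hv]
  linear_combination x * hx

theorem add_one_sub_pow_three_of_root (hx : x ^ 3 - x ^ 2 + 1 = 0) :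
    (x ^ 2 - x + 1) + (1 - (x ^ 2 - x + 1)) ^ 3 = 0 := by
  linear_combination (-x ^ 3 + 2 * x ^ 2 - x + 1) * hx

end FiveTwo

theorem Complex.ne_zero_and_ne_one_of_im_ne_zero {z : ℂ} (h : z.im ≠ 0) : z ≠ 0 ∧ z ≠ 1 :=
  ⟨fun h0 => h (by simp [h0]), fun h1 => h (by simp [h1])⟩

theorem Complex.half_lt_re_of_root {x : ℂ} (hx : x ^ 3 - x ^ 2 + 1 = 0) (him : 0 < x.im) :
    1 / 2 < x.re := by
  obtain ⟨a, b⟩ := x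
  have hre := congrArg Complex.re hx
  have him' := congrArg Complex.im hx
  simp only [pow_succ, pow_zero, one_mul, Complex.sub_re, Complex.add_re, Complex.mul_re,
    Complex.mul_im, Complex.sub_im, Complex.add_im, Complex.one_re, Complex.one_im,
    Complex.zero_re, Complex.zero_im] at hre him' him ⊢
  have hb : b ^ 2 = 3 * a ^ 2 - 2 * a := by
    have : b * (3 * a ^ 2 - b ^ 2 - 2 * a) = 0 := by linear_combination him'
    linear_combination -(mul_eq_zero.mp this).resolve_left him.ne'
  -- eliminating `b` leaves `2a (2a - 1)² = 1`, impossible for `a ≤ 1/2`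
  have ha : 2 * a * (2 * a - 1) ^ 2 = 1 := by linear_combination -hre + (1 - 3 * a) * hb
  nlinarith [sq_nonneg (2 * a - 1), sq_nonneg a]

/-- for `x` the root of `X³ − X² + 1` with positive imaginary part and
`u = x²`, `v = w = x² − x + 1`, the cross-ratios `u, v, w` lie in `ℂ \ {0,1}`, have
positive imaginary part, and satisfy the gluing and cusp equations of the `5₂` knot
complement. -/
theorem gluing_equations_five_two (x : ℂ) (hx : x ^ 3 - x ^ 2 + 1 = 0)
    (him : 0 < x.im) :
    let u : ℂ := x ^ 2
    let v : ℂ := x ^ 2 - x + 1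
    let w : ℂ := x ^ 2 - x + 1
    let u' : ℂ := 1 / (1 - u)
    let u'' : ℂ := 1 - 1 / u
    let v' : ℂ := 1 / (1 - v)
    let v'' : ℂ := 1 - 1 / v
    let w' : ℂ := 1 / (1 - w)
    let w'' : ℂ := 1 - 1 / w
    (u ≠ 0 ∧ u ≠ 1 ∧ v ≠ 0 ∧ v ≠ 1 ∧ w ≠ 0 ∧ w ≠ 1) ∧
    (0 < u.im ∧ 0 < v.im ∧ 0 < w.im) ∧
    (u' * u'' * v * v' * w' ^ 2 * w'' = 1 ∧
      u * u'' * v' * v'' * w ^ 2 = 1 ∧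
      u * u' * v * v'' * w'' = 1) ∧
    (w⁻¹ * u' = 1 ∧
      w' * u' * u * v' * w * w'' * u' * w' * w * v' * u * u'' * v' = 1) := by
  intro u v w u' u'' v' v'' w' w''
  have hre := Complex.half_lt_re_of_root hx him
  have hu_im : 0 < u.im := by
    simp only [u, pow_two, Complex.mul_im]
    nlinarith
  have hv_im : 0 < v.im := by
    simp only [v, pow_two, Complex.add_im, Complex.sub_im, Complex.mul_im, Complex.one_im]
    nlinarith
  obtain ⟨hu0, hu1⟩ := Complex.ne_zero_and_ne_one_of_im_ne_zero hu_im.ne'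
  obtain ⟨hv0, hv1⟩ := Complex.ne_zero_and_ne_one_of_im_ne_zero hv_im.ne'
  have hu : u = v'' := sq_eq_shape''_of_root hx hv0
  have hu' : u' = v := (congrArg shape' hu).trans (shape'_shape'' v)
  have hu'' : u'' = v' := (congrArg shape'' hu).trans (shape''_shape'' hv0 hv1)
  have hvvv : v * v' * v'' = -1 := mul_shape'_mul_shape'' hv0 hv1
  have hcusp : v * v' ^ 3 = -1 :=
    mul_shape'_pow_three_eq_neg_one hv1 (add_one_sub_pow_three_of_root hx)
  refine ⟨⟨hu0, hu1, hv0, hv1, hv0, hv1⟩, ⟨hu_im, hv_im, hv_im⟩, ?_⟩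
  change (u' * u'' * v * v' * v' ^ 2 * v'' = 1 ∧ u * u'' * v' * v'' * v ^ 2 = 1 ∧
      u * u' * v * v'' * v'' = 1) ∧
    v⁻¹ * u' = 1 ∧ v' * u' * u * v' * v * v'' * u' * v' * v * v' * u * u'' * v' = 1
  rw [hu', hu'', hu]
  -- the monomials are `P Q`, `P²`, `P³ / Q` and `P³ Q` with `P = v v' v''`, `Q = v v'³`
  exact ⟨⟨by linear_combination (v * v' ^ 3) * hvvv - hcusp,
      by linear_combination (v * v' * v'' - 1) * hvvv,
      by linear_combination (-((v * v' * v'') ^ 2 - v * v' * v'' + 1)) * hvvv +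
        v ^ 2 * v'' ^ 3 * hcusp⟩,
    inv_mul_cancel₀ hv0,
    by linear_combination ((v * v' * v'') ^ 2 - v * v' * v'' + 1) * (v * v' ^ 3) * hvvv - hcusp⟩
end
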